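/- Let d ≥ 1 and A(x,ξ) := (1/4)(|x|² + 2 x·ξ + 3|ξ|²), with ∇ and Δ taken in all 2d variables (x,ξ). Then for every ε > 0, every integer m ≥ 1, and every (x,ξ) ∈ ℝ^{2d} with |x| ≥ 1/ε and |ξ| ≥ 1/ε: Δ(1 + A^m)(x,ξ) ≤ 6 ε² m (m − 1 + 3d) · A(x,ξ)^{m−1} |∇A(x,ξ)|². -/

import Mathlib

open MeasureTheory Real

noncomputable def WFP.A {d : ℕ} (x ξ : EuclideanSpace ℝ (Fin d)) : ℝ :=
  (1 / 4) * (‖x‖ ^ 2 + 2 * (inner ℝ x ξ : ℝ) + 3 * ‖ξ‖ ^ 2)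

/-- `|∇A|²`, the squared length of the full gradient `∇A(x,ξ) = (1/2)(x+ξ, x+3ξ)`. -/
noncomputable def WFP.gradAsq {d : ℕ} (x ξ : EuclideanSpace ℝ (Fin d)) : ℝ :=
  (1 / 4) * (‖x + ξ‖ ^ 2 + ‖x + (3 : ℝ) • ξ‖ ^ 2)

/-- The Laplacian in all 2d variables `(x,ξ)` of a real-valued function on `ℝ^{2d}`. -/
noncomputable def WFP.laplacian {d : ℕ}
    (f : EuclideanSpace ℝ (Fin d) × EuclideanSpace ℝ (Fin d) → ℝ)
    (p : EuclideanSpace ℝ (Fin d) × EuclideanSpace ℝ (Fin d)) : ℝ :=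
  (∑ i : Fin d, fderiv ℝ (fun q => fderiv ℝ f q (EuclideanSpace.single i 1, 0)) p
      (EuclideanSpace.single i 1, 0))
  + ∑ i : Fin d, fderiv ℝ (fun q => fderiv ℝ f q (0, EuclideanSpace.single i 1)) p
      (0, EuclideanSpace.single i 1)

/-!
`A` is the diagonal `A q = B(q, q)` of a symmetric bilinear form `B` on `ℝ^{2d}`, so
`Δ(1 + A^m) = m(m-1) A^{m-2} |∇A|² + m A^{m-1} ΔA` with `ΔA = 2d`. The identities
`4A = |x+ξ|² + 2|ξ|²` and `2|∇A|² = |x+2ξ|² + |ξ|²` give `2ε²A ≥ 1` and `2ε²|∇A|² ≥ 1` once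
`|ξ| ≥ 1/ε`; multiplying the first term by `2ε²A` and the second by `2ε²|∇A|²` bounds the
Laplacian by `2ε² m (m-1+2d) A^{m-1} |∇A|²`.
-/

namespace WFP

section Calculus

variable {F : Type*} [NormedAddCommGroup F] [NormedSpace ℝ F]

theorem hasFDerivAt_apply_self_of_symm (B : F →L[ℝ] F →L[ℝ] ℝ) (hB : ∀ u v, B u v = B v u)
    (q : F) : HasFDerivAt (fun q => B q q) (((2 : ℝ) • B) q) q := by
  refine (B.hasFDerivAt_of_bilinear (hasFDerivAt_id q) (hasFDerivAt_id q)).congr_fderiv ?_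
  ext v
  simp [hB v q, two_mul]

theorem fderiv_fderiv_const_add_pow {Q : F → ℝ} {D : F →L[ℝ] F →L[ℝ] ℝ}
    (hQ : ∀ q, HasFDerivAt Q (D q) q) (c : ℝ) (m : ℕ) (p v w : F) :
    fderiv ℝ (fun q => fderiv ℝ (fun q => c + Q q ^ m) q v) p w =
      m * (m - 1) * Q p ^ (m - 2) * D p w * D p v + m * Q p ^ (m - 1) * D w v := by
  have hpow (k : ℕ) (q : F) : HasFDerivAt (fun q => Q q ^ k) ((k * Q q ^ (k - 1)) • D q) q :=
    (hasDerivAt_pow k (Q q)).comp_hasFDerivAt q (hQ q)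
  have hfirst : (fun q => fderiv ℝ (fun q => c + Q q ^ m) q v) =
      fun q => m * Q q ^ (m - 1) * D q v := by
    funext q
    simp [((hpow m q).const_add c).fderiv, mul_assoc]
  have hsecond : HasFDerivAt (fun q => m * Q q ^ (m - 1) * D q v) _ p :=
    ((hpow (m - 1) p).const_mul (m : ℝ)).mul (D.flip v).hasFDerivAt
  rw [hfirst, hsecond.fderiv]
  rcases m with _ | _ | m
  · simp
  · simp
  · simp only [Nat.cast_add, Nat.cast_one, add_tsub_cancel_right, add_apply, smul_apply,
      ContinuousLinearMap.flip_apply, smul_eq_mul, Nat.reduceSubDiff]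
    ring

end Calculus

theorem mul_sub_one_nonneg (m : ℕ) : 0 ≤ (m : ℝ) * (m - 1) := by
  rcases m with _ | m
  · simp
  · push_cast
    ring_nf
    positivity

theorem mul_sub_one_mul_pow_sub_two_le {a c : ℝ} (ha : 0 ≤ a) (hca : 1 ≤ c * a) (m : ℕ) :
    (m : ℝ) * (m - 1) * a ^ (m - 2) ≤ c * ((m : ℝ) * (m - 1) * a ^ (m - 1)) := by
  rcases m with _ | _ | m
  · simp
  · simp
  · rw [show m + 1 + 1 - 2 = m by omega, show m + 1 + 1 - 1 = m + 1 by omega, pow_succ]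
    have h : 0 ≤ ((m + 1 + 1 : ℕ) : ℝ) * ((m + 1 + 1 : ℕ) - 1) * a ^ m :=
      mul_nonneg (mul_sub_one_nonneg _) (pow_nonneg ha m)
    nlinarith

theorem mul_sub_one_mul_pow_sub_two_mul_add_le {a c g t : ℝ} (ha : 0 ≤ a) (hca : 1 ≤ c * a)
    (hcg : 1 ≤ c * g) (ht : 0 ≤ t) (m : ℕ) :
    m * (m - 1) * a ^ (m - 2) * g + m * a ^ (m - 1) * t ≤
      c * m * (m - 1 + t) * a ^ (m - 1) * g := by
  have hg : 0 ≤ g := by nlinarith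
  have hmt : 0 ≤ (m : ℝ) * a ^ (m - 1) * t := by positivity
  calc (m : ℝ) * (m - 1) * a ^ (m - 2) * g + m * a ^ (m - 1) * t
      ≤ c * ((m : ℝ) * (m - 1) * a ^ (m - 1)) * g + m * a ^ (m - 1) * t * (c * g) :=
        add_le_add (mul_le_mul_of_nonneg_right (mul_sub_one_mul_pow_sub_two_le ha hca m) hg)
          (le_mul_of_one_le_right hmt hcg)
    _ = c * m * (m - 1 + t) * a ^ (m - 1) * g := by ring

theorem one_le_sq_mul_sq_of_one_div_le {ε t : ℝ} (hε : 0 < ε) (h : 1 / ε ≤ t) :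
    1 ≤ ε ^ 2 * t ^ 2 := by
  rw [← mul_pow]
  exact one_le_pow₀ (by rwa [div_le_iff₀ hε, mul_comm] at h)

variable {d : ℕ}

local notation "E" => EuclideanSpace ℝ (Fin d)

theorem laplacian_const_add_pow {Q : E × E → ℝ} {D : E × E →L[ℝ] E × E →L[ℝ] ℝ}
    (hQ : ∀ q, HasFDerivAt Q (D q) q) (c : ℝ) (m : ℕ) (p : E × E) :
    laplacian (fun q => c + Q q ^ m) p =
      m * (m - 1) * Q p ^ (m - 2) *
          (∑ i, D p (EuclideanSpace.single i 1, 0) ^ 2 +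
            ∑ i, D p (0, EuclideanSpace.single i 1) ^ 2) +
        m * Q p ^ (m - 1) *
          (∑ i, D (EuclideanSpace.single i 1, 0) (EuclideanSpace.single i 1, 0) +
            ∑ i, D (0, EuclideanSpace.single i 1) (0, EuclideanSpace.single i 1)) := by
  have hsecond (v : E × E) : fderiv ℝ (fun q => fderiv ℝ (fun q => c + Q q ^ m) q v) p v =
      m * (m - 1) * Q p ^ (m - 2) * D p v ^ 2 + m * Q p ^ (m - 1) * D v v := by
    rw [fderiv_fderiv_const_add_pow hQ]
    ring
  simp only [laplacian, hsecond, Finset.sum_add_distrib, ← Finset.mul_sum]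
  ring

noncomputable def polarA : E × E →L[ℝ] E × E →L[ℝ] ℝ :=
  (1 / 4 : ℝ) • ((innerSL ℝ).bilinearComp (.fst ℝ E E + .snd ℝ E E) (.fst ℝ E E) +
    (innerSL ℝ).bilinearComp (.fst ℝ E E + (3 : ℝ) • .snd ℝ E E) (.snd ℝ E E))

theorem polarA_apply (q v : E × E) :
    polarA q v = 1 / 4 * (inner ℝ (q.1 + q.2) v.1 + inner ℝ (q.1 + (3 : ℝ) • q.2) v.2) := by
  simp [polarA, inner_add_left, real_inner_smul_left, mul_add]

theorem polarA_comm (u v : E × E) : polarA u v = polarA v u := by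
  simp only [polarA_apply, inner_add_left, inner_add_right, real_inner_smul_left,
    real_inner_smul_right, real_inner_comm u.1, real_inner_comm u.2]
  ring

theorem A_eq_polarA (q : E × E) : A q.1 q.2 = polarA q q := by
  simp only [A, polarA_apply, inner_add_left, real_inner_smul_left, real_inner_self_eq_norm_sq,
    real_inner_comm q.1 q.2]
  ring

theorem hasFDerivAt_A (q : E × E) :
    HasFDerivAt (fun q : E × E => A q.1 q.2) (((2 : ℝ) • polarA) q) q := by
  simpa only [A_eq_polarA] using hasFDerivAt_apply_self_of_symm polarA polarA_comm q

theorem sum_sq_inner_single (y : E) :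
    ∑ i, inner ℝ y (EuclideanSpace.single i (1 : ℝ)) ^ 2 = ‖y‖ ^ 2 := by
  simp [EuclideanSpace.inner_single_right, EuclideanSpace.real_norm_sq_eq]

theorem sum_sq_two_polarA_single_eq_gradAsq (p : E × E) :
    ∑ i, ((2 : ℝ) • polarA) p (EuclideanSpace.single i 1, 0) ^ 2 +
        ∑ i, ((2 : ℝ) • polarA) p (0, EuclideanSpace.single i 1) ^ 2 = gradAsq p.1 p.2 := by
  simp only [smul_apply, polarA_apply, inner_zero_right, smul_eq_mul]
  simp only [add_zero, zero_add, mul_pow, ← Finset.mul_sum, sum_sq_inner_single, gradAsq]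
  ring

theorem sum_two_polarA_single_single :
    ∑ i : Fin d, ((2 : ℝ) • polarA) (EuclideanSpace.single i 1, 0) (EuclideanSpace.single i 1, 0) +
        ∑ i : Fin d,
          ((2 : ℝ) • polarA) (0, EuclideanSpace.single i 1) (0, EuclideanSpace.single i 1) =
      2 * d := by
  simp only [smul_apply, smul_eq_mul, polarA_apply, add_zero, zero_add, inner_zero_right,
    smul_zero, real_inner_smul_left, real_inner_self_eq_norm_sq, PiLp.norm_single, norm_one,
    Finset.sum_const, Finset.card_univ, Fintype.card_fin, nsmul_eq_mul]
  ring

theorem laplacian_one_add_A_pow (m : ℕ) (p : E × E) :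
    laplacian (fun q => 1 + A q.1 q.2 ^ m) p =
      m * (m - 1) * A p.1 p.2 ^ (m - 2) * gradAsq p.1 p.2 +
        m * A p.1 p.2 ^ (m - 1) * (2 * d) := by
  rw [laplacian_const_add_pow (hasFDerivAt_A (d := d)), sum_sq_two_polarA_single_eq_gradAsq,
    sum_two_polarA_single_single]

theorem A_eq_add_sq_norm (x ξ : E) : A x ξ = (‖x + ξ‖ ^ 2 + 2 * ‖ξ‖ ^ 2) / 4 := by
  rw [A, norm_add_sq_real]
  ring

theorem gradAsq_eq_add_sq_norm (x ξ : E) :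
    gradAsq x ξ = (‖x + (2 : ℝ) • ξ‖ ^ 2 + ‖ξ‖ ^ 2) / 2 := by
  simp only [gradAsq, norm_add_sq_real, inner_smul_right, norm_smul, Real.norm_ofNat]
  ring

theorem A_nonneg (x ξ : E) : 0 ≤ A x ξ := by
  rw [A_eq_add_sq_norm]
  positivity

theorem gradAsq_nonneg (x ξ : E) : 0 ≤ gradAsq x ξ := by
  rw [gradAsq_eq_add_sq_norm]
  positivity

theorem one_le_two_mul_sq_mul_A (x : E) {ξ : E} {ε : ℝ} (hε : 0 < ε) (hξ : 1 / ε ≤ ‖ξ‖) :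
    1 ≤ 2 * ε ^ 2 * A x ξ := by
  have := mul_nonneg (sq_nonneg ε) (sq_nonneg ‖x + ξ‖)
  rw [A_eq_add_sq_norm]
  linarith [one_le_sq_mul_sq_of_one_div_le hε hξ]

theorem one_le_two_mul_sq_mul_gradAsq (x : E) {ξ : E} {ε : ℝ} (hε : 0 < ε) (hξ : 1 / ε ≤ ‖ξ‖) :
    1 ≤ 2 * ε ^ 2 * gradAsq x ξ := by
  have := mul_nonneg (sq_nonneg ε) (sq_nonneg ‖x + (2 : ℝ) • ξ‖)
  rw [gradAsq_eq_add_sq_norm]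
  linarith [one_le_sq_mul_sq_of_one_div_le hε hξ]

end WFP

theorem WFP.lemma_d_general (d : ℕ) (ε : ℝ) (hε : 0 < ε) (m : ℕ)
    (x ξ : EuclideanSpace ℝ (Fin d)) (hξ : 1 / ε ≤ ‖ξ‖) :
    WFP.laplacian (fun q => 1 + WFP.A q.1 q.2 ^ m) (x, ξ) ≤
      6 * ε ^ 2 * (m : ℝ) * ((m : ℝ) - 1 + 3 * d) *
        WFP.A x ξ ^ (m - 1) * WFP.gradAsq x ξ := by
  have hA0 := WFP.A_nonneg x ξ
  have hG0 := WFP.gradAsq_nonneg x ξ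
  have hm := WFP.mul_sub_one_nonneg m
  calc WFP.laplacian (fun q => 1 + WFP.A q.1 q.2 ^ m) (x, ξ)
      = m * (m - 1) * WFP.A x ξ ^ (m - 2) * WFP.gradAsq x ξ +
          m * WFP.A x ξ ^ (m - 1) * (2 * d) := WFP.laplacian_one_add_A_pow m (x, ξ)
    _ ≤ 2 * ε ^ 2 * m * (m - 1 + 2 * d) * WFP.A x ξ ^ (m - 1) * WFP.gradAsq x ξ :=
        WFP.mul_sub_one_mul_pow_sub_two_mul_add_le hA0 (WFP.one_le_two_mul_sq_mul_A x hε hξ)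
          (WFP.one_le_two_mul_sq_mul_gradAsq x hε hξ) (by positivity) m
    _ ≤ 6 * ε ^ 2 * m * (m - 1 + 3 * d) * WFP.A x ξ ^ (m - 1) * WFP.gradAsq x ξ := by
        gcongr ?_ * _ * _
        nlinarith [mul_nonneg (sq_nonneg ε) hm,
          mul_nonneg (sq_nonneg ε) (mul_nonneg (Nat.cast_nonneg (α := ℝ) m) d.cast_nonneg)]

/-- for every `ε > 0`, `m ≥ 1`, and `|x| ≥ 1/ε`, `|ξ| ≥ 1/ε`:
`Δ(1 + A^m) ≤ 6 ε² m (m − 1 + 3d) A^{m−1} |∇A|²`. -/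
theorem WFP.lemma_d (d : ℕ) (hd : 1 ≤ d) (ε : ℝ) (hε : 0 < ε) (m : ℕ) (hm : 1 ≤ m)
    (x ξ : EuclideanSpace ℝ (Fin d)) (hx : 1 / ε ≤ ‖x‖) (hξ : 1 / ε ≤ ‖ξ‖) :
    WFP.laplacian (fun q => 1 + WFP.A q.1 q.2 ^ m) (x, ξ) ≤
      6 * ε ^ 2 * (m : ℝ) * ((m : ℝ) - 1 + 3 * d) *
        WFP.A x ξ ^ (m - 1) * WFP.gradAsq x ξ :=
  WFP.lemma_d_general d ε hε m x ξ hξ
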